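/- arXiv:1406.1684 — 3 statements merged into one kernel-verified Lean document; each statement's English description precedes it below -/
import Mathlib

section
/- Let p ∈ (1,2] and let p' = p/(p−1) be its conjugate exponent. Let F : ℝ → ℝ be differentiable and bounded from below, and suppose there exists c₃ > 0 such that |F'(s)|^p ≤ c₃(|F(s)| + 1) for all s ∈ ℝ. Then there exist constants c₄ > 0 and c₅ ≥ 0 such that |F(s)| ≤ c₄|s|^{p'} + c₅ for all s ∈ ℝ. -/
/-! For `1/p + 1/q = 1`, hypothesis (H4) bounds the derivative of `(F + B)^(1/q)`,
where `B` is chosen so that `F + B ≥ |F| + 1`: indeed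
`|((F + B)^(1/q))'| = (1/q) |F'| (F + B)^(-1/p) ≤ (1/q) c₃^(1/p)`.
So `(F + B)^(1/q)` grows at most linearly, and raising to the power `q` gives growth of order
`|s|^q`. -/

open Real

namespace Real

lemma rpow_add_le_mul_rpow_add_rpow {a b q : ℝ} (ha : 0 ≤ a) (hb : 0 ≤ b) (hq : 1 ≤ q) :
    (a + b) ^ q ≤ 2 ^ (q - 1) * (a ^ q + b ^ q) := by
  lift a to NNReal using ha
  lift b to NNReal using hb
  exact_mod_cast NNReal.rpow_add_le_mul_rpow_add_rpow a b hq

end Real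

lemma le_mul_rpow_add_rpow_of_rpow_inv_le_add {x a b q : ℝ} (hq : 1 ≤ q) (hx : 0 ≤ x)
    (ha : 0 ≤ a) (hb : 0 ≤ b) (h : x ^ q⁻¹ ≤ a + b) :
    x ≤ 2 ^ (q - 1) * (a ^ q + b ^ q) :=
  ((rpow_inv_le_iff_of_pos hx (add_nonneg ha hb) (by linarith)).1 h).trans
    (rpow_add_le_mul_rpow_add_rpow ha hb hq)

lemma abs_mul_rpow_neg_inv_le {x y c p : ℝ} (hp : 0 < p) (hc : 0 ≤ c) (hy : 0 < y)
    (h : |x| ^ p ≤ c * y) : |x * y ^ (-p⁻¹)| ≤ c ^ p⁻¹ := by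
  have hx : |x| ≤ c ^ p⁻¹ * y ^ p⁻¹ := by
    rw [← mul_rpow hc hy.le]
    exact (le_rpow_inv_iff_of_pos (abs_nonneg x) (by positivity) hp).2 h
  rw [abs_mul, abs_of_pos (rpow_pos_of_pos hy _)]
  calc |x| * y ^ (-p⁻¹) ≤ c ^ p⁻¹ * y ^ p⁻¹ * y ^ (-p⁻¹) := by gcongr
    _ = c ^ p⁻¹ := by rw [mul_assoc, ← rpow_add hy, add_neg_cancel, rpow_zero, mul_one]

lemma abs_sub_rpow_inv_le_of_abs_deriv_rpow_le {u u' : ℝ → ℝ} {p q c : ℝ}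
    (hpq : p.HolderConjugate q) (hc : 0 ≤ c) (hu : ∀ s, HasDerivAt u (u' s) s)
    (hpos : ∀ s, 0 < u s) (h : ∀ s, |u' s| ^ p ≤ c * u s) (s t : ℝ) :
    |u s ^ q⁻¹ - u t ^ q⁻¹| ≤ q⁻¹ * c ^ p⁻¹ * |s - t| := by
  have hderiv : ∀ x, HasDerivAt (fun x => u x ^ q⁻¹) (q⁻¹ * (u' x * u x ^ (-p⁻¹))) x := by
    intro x
    convert (hu x).rpow_const (p := q⁻¹) (Or.inl (hpos x).ne') using 1
    rw [hpq.symm.inv_sub_one]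
    ring
  have hbound : ∀ x, ‖q⁻¹ * (u' x * u x ^ (-p⁻¹))‖ ≤ q⁻¹ * c ^ p⁻¹ := fun x => by
    rw [norm_mul, norm_of_nonneg hpq.symm.inv_nonneg]
    exact mul_le_mul_of_nonneg_left (abs_mul_rpow_neg_inv_le hpq.pos hc (hpos x) (h x))
      hpq.symm.inv_nonneg
  simpa only [norm_eq_abs] using convex_univ.norm_image_sub_le_of_norm_hasDerivWithin_le
    (fun x _ => (hderiv x).hasDerivWithinAt) (fun x _ => hbound x) (Set.mem_univ t)
    (Set.mem_univ s)

lemma BddBelow.exists_abs_add_one_le_add {α : Type*} {f : α → ℝ} (h : BddBelow (Set.range f)) :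
    ∃ B, ∀ a, |f a| + 1 ≤ f a + B := by
  obtain ⟨m, hm⟩ := h
  refine ⟨2 * |m| + 1, fun a => ?_⟩
  have hma : -|m| ≤ f a := (neg_abs_le m).trans (hm ⟨a, rfl⟩)
  rcases abs_cases (f a) with ⟨h, -⟩ | ⟨h, -⟩ <;> rw [h] <;> linarith [abs_nonneg m]

theorem stmt_1_general (p : ℝ) (hp1 : 1 < p) (F F' : ℝ → ℝ)
    (hF : ∀ s : ℝ, HasDerivAt F (F' s) s)
    (hbdd : BddBelow (Set.range F))
    (c₃ : ℝ) (hc₃ : 0 < c₃)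
    (hH4 : ∀ s : ℝ, |F' s| ^ p ≤ c₃ * (|F s| + 1)) :
    ∃ c₄ > (0 : ℝ), ∃ c₅ ≥ (0 : ℝ), ∀ s : ℝ,
      |F s| ≤ c₄ * |s| ^ (p / (p - 1)) + c₅ := by
  set q := p / (p - 1)
  have hpq : p.HolderConjugate q := .conjExponent hp1
  obtain ⟨B, hB⟩ := hbdd.exists_abs_add_one_le_add
  have hpos : ∀ s, 0 < F s + B := fun s => by linarith [hB s, abs_nonneg (F s)]
  have hgrowth := abs_sub_rpow_inv_le_of_abs_deriv_rpow_le hpq hc₃.le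
    (fun s => (hF s).add_const B) hpos
    (fun s => (hH4 s).trans (mul_le_mul_of_nonneg_left (hB s) hc₃.le))
  set K := q⁻¹ * c₃ ^ p⁻¹
  have hK : 0 < K := mul_pos hpq.symm.inv_pos (rpow_pos_of_pos hc₃ _)
  have hv₀ : 0 ≤ (F 0 + B) ^ q⁻¹ := rpow_nonneg (hpos 0).le _
  refine ⟨2 ^ (q - 1) * K ^ q, mul_pos (by positivity) (rpow_pos_of_pos hK _),
    2 ^ (q - 1) * ((F 0 + B) ^ q⁻¹) ^ q, mul_nonneg (by positivity) (rpow_nonneg hv₀ _),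
    fun s => ?_⟩
  have hs := (abs_sub_le_iff.1 (hgrowth s 0)).1
  rw [sub_zero] at hs
  calc |F s| ≤ F s + B := by linarith [hB s]
    _ ≤ 2 ^ (q - 1) * (((F 0 + B) ^ q⁻¹) ^ q + (K * |s|) ^ q) :=
      le_mul_rpow_add_rpow_of_rpow_inv_le_add hpq.symm.lt.le (hpos s).le hv₀
        (mul_nonneg hK.le (abs_nonneg s)) (by linarith)
    _ = 2 ^ (q - 1) * K ^ q * |s| ^ q + 2 ^ (q - 1) * ((F 0 + B) ^ q⁻¹) ^ q := by
      rw [mul_rpow hK.le (abs_nonneg s)]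
      ring

/-- If `p ∈ (1,2]`, `F : ℝ → ℝ` is differentiable with derivative `F'`, bounded from
below, and `|F'(s)|^p ≤ c₃(|F(s)| + 1)` for all `s` (assumption (H4)), then `F` has
polynomial growth of order `p' = p/(p-1)`: there are `c₄ > 0` and `c₅ ≥ 0` with
`|F(s)| ≤ c₄ |s|^{p'} + c₅` for all `s`. -/
theorem stmt_1 (p : ℝ) (hp1 : 1 < p) (hp2 : p ≤ 2) (F F' : ℝ → ℝ)
    (hF : ∀ s : ℝ, HasDerivAt F (F' s) s)
    (hbdd : BddBelow (Set.range F))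
    (c₃ : ℝ) (hc₃ : 0 < c₃)
    (hH4 : ∀ s : ℝ, |F' s| ^ p ≤ c₃ * (|F s| + 1)) :
    ∃ c₄ > (0 : ℝ), ∃ c₅ ≥ (0 : ℝ), ∀ s : ℝ,
      |F s| ≤ c₄ * |s| ^ (p / (p - 1)) + c₅ :=
  stmt_1_general p hp1 F F' hF hbdd c₃ hc₃ hH4
end

section
/- Let d ≥ 1, let Ω ⊆ ℝ^d be a measurable set of finite Lebesgue measure, let J ∈ L¹(ℝ^d) satisfy J(x) = J(−x) for a.e. x, and suppose a(x) := ∫_Ω J(x − y) dy ≥ 0 for a.e. x ∈ Ω. Let F : ℝ → ℝ be measurable and suppose there are constants c₁ > (1/2)‖J‖_{L¹(ℝ^d)} and c₂ ∈ ℝ with F(s) ≥ c₁s² − c₂ for all s ∈ ℝ. Then there exist constants α > 0 and c ≥ 0, depending only on c₁, c₂, ‖J‖_{L¹(ℝ^d)} and the measure of Ω, such that for every φ ∈ L²(Ω) with F∘φ ∈ L¹(Ω): ∫_Ω a(x)φ(x)² dx + 2∫_Ω F(φ(x)) dx − ∫_Ω ∫_Ω J(x − y)φ(x)φ(y) dx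 dy ≥ α(‖φ‖²_{L²(Ω)} + ∫_Ω F(φ(x)) dx) − c. -/
open MeasureTheory

/-! The nonlocal term is handled by a Schur test: `2 |J(x-y) φ(x) φ(y)| ≤ |J(x-y)| (φ(x)² + φ(y)²)`,
and integrating `|J(x - ·)|` or `|J(· - y)|` over `Ω` costs at most `‖J‖₁` by translation invariance,
so `|∫∫ J(x-y) φ(x) φ(y)| ≤ ‖J‖₁ ‖φ‖²`. As `a ≥ 0`, the energy is at least `2 ∫ F(φ) - ‖J‖₁ ‖φ‖²`.
Keeping `α ∫ F(φ)` and bounding the remaining `(2 - α) ∫ F(φ)` below by (H3), the choice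
`α = (2c₁ - ‖J‖₁) / (1 + c₁)` makes `(2 - α) c₁ = α + ‖J‖₁`, so the `‖φ‖²` terms balance exactly and
only `c = 2 |c₂| |Ω|` is lost. -/

theorem abs_comp_sub_mul_sq_snd_eq_comp_swap {G : Type*} [AddGroup G] (J φ : G → ℝ) :
    (fun p : G × G => |J (p.1 - p.2)| * φ p.2 ^ 2) =
      (fun p : G × G => |J (-(p.1 - p.2))| * φ p.1 ^ 2) ∘ Prod.swap := by
  funext p
  simp [neg_sub]

section ConvolutionKernel

variable {G : Type*} [MeasurableSpace G] [AddGroup G] [MeasurableAdd₂ G] [MeasurableNeg G]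
  {μ : Measure G} [μ.IsAddLeftInvariant] {J φ : G → ℝ} {s : Set G}

theorem setIntegral_abs_comp_sub_left_le [μ.IsNegInvariant] (hJ : Integrable J μ) (s : Set G)
    (x : G) : ∫ y in s, |J (x - y)| ∂μ ≤ ∫ z, |J z| ∂μ :=
  calc ∫ y in s, |J (x - y)| ∂μ ≤ ∫ y, |J (x - y)| ∂μ :=
        setIntegral_le_integral (hJ.abs.comp_sub_left x) (.of_forall fun _ => abs_nonneg _)
    _ = ∫ z, |J z| ∂μ := integral_sub_left_eq_self (fun z => |J z|) μ x

theorem aestronglyMeasurable_comp_sub_prod_restrict [SFinite μ] (hJ : AEStronglyMeasurable J μ)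
    (s : Set G) :
    AEStronglyMeasurable (fun p : G × G => J (p.1 - p.2)) ((μ.restrict s).prod (μ.restrict s)) :=
  have hs : μ.restrict s ≪ μ := Measure.absolutelyContinuous_of_le Measure.restrict_le_self
  hJ.comp_quasiMeasurePreserving <| (quasiMeasurePreserving_sub μ μ).mono (hs.prod hs) .rfl

variable [SFinite μ] [μ.IsNegInvariant]

theorem integrable_abs_comp_sub_mul_sq (hJ : Integrable J μ) (hφ : MemLp φ 2 (μ.restrict s)) :
    Integrable (fun p : G × G => |J (p.1 - p.2)| * φ p.1 ^ 2)
      ((μ.restrict s).prod (μ.restrict s)) := by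
  have hmeas : AEStronglyMeasurable (fun p : G × G => |J (p.1 - p.2)| * φ p.1 ^ 2)
      ((μ.restrict s).prod (μ.restrict s)) :=
    (aestronglyMeasurable_comp_sub_prod_restrict hJ.1 s).norm.mul (hφ.1.pow 2).comp_fst
  refine (integrable_prod_iff hmeas).2
    ⟨.of_forall fun x => (hJ.abs.comp_sub_left x).restrict.mul_const (φ x ^ 2), ?_⟩
  refine (hφ.integrable_sq.const_mul (∫ z, |J z| ∂μ)).mono' hmeas.norm.integral_prod_right'
    (.of_forall fun x => ?_)
  simp only [norm_mul, norm_pow, Real.norm_eq_abs, abs_abs, sq_abs, integral_mul_const]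
  rw [abs_of_nonneg (by positivity)]
  exact mul_le_mul_of_nonneg_right (setIntegral_abs_comp_sub_left_le hJ s x) (sq_nonneg _)

theorem integral_abs_comp_sub_mul_sq_le (hJ : Integrable J μ) (hφ : MemLp φ 2 (μ.restrict s)) :
    ∫ p, |J (p.1 - p.2)| * φ p.1 ^ 2 ∂((μ.restrict s).prod (μ.restrict s)) ≤
      (∫ z, |J z| ∂μ) * ∫ x in s, φ x ^ 2 ∂μ := by
  have hint := integrable_abs_comp_sub_mul_sq hJ hφ
  rw [integral_prod _ hint, ← integral_const_mul]
  refine integral_mono hint.integral_prod_left (hφ.integrable_sq.const_mul _) fun x => ?_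
  simp only [integral_mul_const]
  exact mul_le_mul_of_nonneg_right (setIntegral_abs_comp_sub_left_le hJ s x) (sq_nonneg _)

theorem integrable_abs_comp_sub_mul_sq_snd (hJ : Integrable J μ) (hφ : MemLp φ 2 (μ.restrict s)) :
    Integrable (fun p : G × G => |J (p.1 - p.2)| * φ p.2 ^ 2)
      ((μ.restrict s).prod (μ.restrict s)) := by
  rw [abs_comp_sub_mul_sq_snd_eq_comp_swap]
  exact (integrable_abs_comp_sub_mul_sq hJ.comp_neg hφ).swap

theorem integral_abs_comp_sub_mul_sq_snd_le (hJ : Integrable J μ) (hφ : MemLp φ 2 (μ.restrict s)) :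
    ∫ p, |J (p.1 - p.2)| * φ p.2 ^ 2 ∂((μ.restrict s).prod (μ.restrict s)) ≤
      (∫ z, |J z| ∂μ) * ∫ x in s, φ x ^ 2 ∂μ := by
  rw [abs_comp_sub_mul_sq_snd_eq_comp_swap, ← integral_neg_eq_self (fun z => |J z|) μ]
  exact (integral_prod_swap (fun p : G × G => |J (-(p.1 - p.2))| * φ p.1 ^ 2)).trans_le
    (integral_abs_comp_sub_mul_sq_le hJ.comp_neg hφ)

theorem abs_mul_mul_le_add_sq (j a b : ℝ) : |j * a * b| ≤ (|j| * a ^ 2 + |j| * b ^ 2) / 2 := by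
  rw [abs_mul, abs_mul, ← sq_abs a, ← sq_abs b]
  nlinarith [abs_nonneg j, two_mul_le_add_sq |a| |b|]

theorem integrable_comp_sub_mul_mul (hJ : Integrable J μ) (hφ : MemLp φ 2 (μ.restrict s)) :
    Integrable (fun p : G × G => J (p.1 - p.2) * φ p.1 * φ p.2)
      ((μ.restrict s).prod (μ.restrict s)) :=
  (((integrable_abs_comp_sub_mul_sq hJ hφ).add
    (integrable_abs_comp_sub_mul_sq_snd hJ hφ)).div_const 2).mono'
    (((aestronglyMeasurable_comp_sub_prod_restrict hJ.1 s).mul hφ.1.comp_fst).mul hφ.1.comp_snd)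
    (.of_forall fun _ => abs_mul_mul_le_add_sq _ _ _)

theorem abs_setIntegral_comp_sub_mul_mul_le (hJ : Integrable J μ)
    (hφ : MemLp φ 2 (μ.restrict s)) :
    |∫ x in s, ∫ y in s, J (x - y) * φ x * φ y ∂μ ∂μ| ≤
      (∫ z, |J z| ∂μ) * ∫ x in s, φ x ^ 2 ∂μ := by
  have h₁ := integrable_abs_comp_sub_mul_sq hJ hφ
  have h₂ := integrable_abs_comp_sub_mul_sq_snd hJ hφ
  rw [← integral_prod _ (integrable_comp_sub_mul_mul hJ hφ)]
  calc _ ≤ ∫ p, (|J (p.1 - p.2)| * φ p.1 ^ 2 + |J (p.1 - p.2)| * φ p.2 ^ 2) / 2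
          ∂((μ.restrict s).prod (μ.restrict s)) :=
        abs_integral_le_integral_abs.trans <| integral_mono
          (integrable_comp_sub_mul_mul hJ hφ).abs ((h₁.add h₂).div_const 2)
          fun _ => abs_mul_mul_le_add_sq _ _ _
    _ = ((∫ p, |J (p.1 - p.2)| * φ p.1 ^ 2 ∂((μ.restrict s).prod (μ.restrict s))) +
          ∫ p, |J (p.1 - p.2)| * φ p.2 ^ 2 ∂((μ.restrict s).prod (μ.restrict s))) / 2 := by
        rw [integral_div, integral_add h₁ h₂]
    _ ≤ _ := by
        linarith [integral_abs_comp_sub_mul_sq_le hJ hφ, integral_abs_comp_sub_mul_sq_snd_le hJ hφ]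

end ConvolutionKernel

theorem sub_le_integral_comp_of_forall_ge {X : Type*} [MeasurableSpace X] {ν : Measure X}
    [IsFiniteMeasure ν] {F : ℝ → ℝ} {φ : X → ℝ} {c₁ c₂ : ℝ} (hF : ∀ s, F s ≥ c₁ * s ^ 2 - c₂)
    (hφ : MemLp φ 2 ν) (hFφ : Integrable (fun x => F (φ x)) ν) :
    c₁ * ∫ x, φ x ^ 2 ∂ν - c₂ * ν.real Set.univ ≤ ∫ x, F (φ x) ∂ν := by
  have hint : Integrable (fun x => c₁ * φ x ^ 2) ν := hφ.integrable_sq.const_mul c₁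
  calc c₁ * ∫ x, φ x ^ 2 ∂ν - c₂ * ν.real Set.univ = ∫ x, (c₁ * φ x ^ 2 - c₂) ∂ν := by
        rw [integral_sub hint (integrable_const c₂), integral_const_mul, integral_const,
          smul_eq_mul, mul_comm c₂]
    _ ≤ ∫ x, F (φ x) ∂ν := integral_mono (hint.sub (integrable_const c₂)) hFφ fun x => hF (φ x)

theorem le_add_two_mul_sub_of_bounds {K c₁ c₂ V S I A B : ℝ} (hK : 0 ≤ K) (hc₁ : K < 2 * c₁)
    (hV : 0 ≤ V) (hA : 0 ≤ A) (hB : B ≤ K * S) (hI : c₁ * S - c₂ * V ≤ I) :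
    (2 * c₁ - K) / (1 + c₁) * (S + I) - 2 * |c₂| * V ≤ A + 2 * I - B := by
  set α := (2 * c₁ - K) / (1 + c₁)
  have hα : α * (1 + c₁) = 2 * c₁ - K := div_mul_cancel₀ _ (by linarith)
  have hα0 : 0 ≤ α := div_nonneg (by linarith) (by linarith)
  have hα2 : 0 ≤ 2 - α := by
    rw [sub_nonneg, div_le_iff₀ (by linarith)]
    linarith
  have hcoeff : (2 - α) * c₁ * S = (α + K) * S := by linear_combination (-S) * hα
  have hc₂ : (2 - α) * (c₂ * V) ≤ 2 * |c₂| * V :=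
    calc (2 - α) * (c₂ * V) ≤ (2 - α) * (|c₂| * V) :=
          mul_le_mul_of_nonneg_left (mul_le_mul_of_nonneg_right (le_abs_self c₂) hV) hα2
      _ ≤ 2 * |c₂| * V := by
          nlinarith [mul_nonneg hα0 (mul_nonneg (abs_nonneg c₂) hV)]
  linarith [mul_le_mul_of_nonneg_left hI hα2]

theorem stmt_14_general (d : ℕ) (Ω : Set (Fin d → ℝ))
    (hΩfin : volume Ω < ⊤)
    (J : (Fin d → ℝ) → ℝ) (hJ : Integrable J volume)
    (ha : ∀ᵐ x ∂(volume.restrict Ω), 0 ≤ ∫ y in Ω, J (x - y))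
    (F : ℝ → ℝ)
    (c₁ c₂ : ℝ) (hc₁ : (1 / 2 : ℝ) * ∫ z, |J z| < c₁)
    (hH3 : ∀ s : ℝ, F s ≥ c₁ * s ^ 2 - c₂) :
    ∃ α > (0 : ℝ), ∃ c ≥ (0 : ℝ),
      ∀ φ : (Fin d → ℝ) → ℝ, MemLp φ 2 (volume.restrict Ω) →
        Integrable (fun x => F (φ x)) (volume.restrict Ω) →
        (∫ x in Ω, (∫ y in Ω, J (x - y)) * φ x ^ 2) + 2 * (∫ x in Ω, F (φ x)) -
            (∫ x in Ω, ∫ y in Ω, J (x - y) * φ x * φ y) ≥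
          α * ((∫ x in Ω, φ x ^ 2) + ∫ x in Ω, F (φ x)) - c := by
  have hK : 0 ≤ ∫ z, |J z| := integral_nonneg fun _ => abs_nonneg _
  refine ⟨(2 * c₁ - ∫ z, |J z|) / (1 + c₁), div_pos (by linarith) (by linarith),
    2 * |c₂| * volume.real Ω, by positivity, fun φ hφ hFφ => ?_⟩
  have : IsFiniteMeasure (volume.restrict Ω) := isFiniteMeasure_restrict.2 hΩfin.ne
  have hA : 0 ≤ ∫ x in Ω, (∫ y in Ω, J (x - y)) * φ x ^ 2 :=
    integral_nonneg_of_ae (ha.mono fun x hx => mul_nonneg hx (sq_nonneg _))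
  have hB := (le_abs_self _).trans (abs_setIntegral_comp_sub_mul_mul_le hJ hφ)
  have hI := sub_le_integral_comp_of_forall_ge hH3 hφ hFφ
  rw [measureReal_restrict_apply_univ] at hI
  exact le_add_two_mul_sub_of_bounds hK (by linarith) measureReal_nonneg hA hB hI

/-- Coercivity of the nonlocal free energy (estimate (stima5)): if `Ω ⊆ ℝ^d` has
finite Lebesgue measure, `J ∈ L¹(ℝ^d)` is even a.e. with `a(x) := ∫_Ω J(x-y) dy ≥ 0`
a.e. on `Ω` (assumption (H1)), `F` is measurable with `F(s) ≥ c₁ s² - c₂` where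
`c₁ > (1/2)‖J‖_{L¹}` (assumption (H3)), then there are `α > 0` and `c ≥ 0` such that
for every `φ ∈ L²(Ω)` with `F ∘ φ ∈ L¹(Ω)`:
`∫_Ω a φ² + 2 ∫_Ω F(φ) - ∫_Ω∫_Ω J(x-y) φ(x) φ(y) ≥ α (‖φ‖²_{L²} + ∫_Ω F(φ)) - c`. -/
theorem stmt_14 (d : ℕ) (hd : 1 ≤ d) (Ω : Set (Fin d → ℝ)) (hΩ : MeasurableSet Ω)
    (hΩfin : volume Ω < ⊤)
    (J : (Fin d → ℝ) → ℝ) (hJ : Integrable J volume)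
    (hJeven : ∀ᵐ x : (Fin d → ℝ) ∂volume, J (-x) = J x)
    (ha : ∀ᵐ x ∂(volume.restrict Ω), 0 ≤ ∫ y in Ω, J (x - y))
    (F : ℝ → ℝ) (hFmeas : Measurable F)
    (c₁ c₂ : ℝ) (hc₁ : (1 / 2 : ℝ) * ∫ z, |J z| < c₁)
    (hH3 : ∀ s : ℝ, F s ≥ c₁ * s ^ 2 - c₂) :
    ∃ α > (0 : ℝ), ∃ c ≥ (0 : ℝ),
      ∀ φ : (Fin d → ℝ) → ℝ, MemLp φ 2 (volume.restrict Ω) →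
        Integrable (fun x => F (φ x)) (volume.restrict Ω) →
        (∫ x in Ω, (∫ y in Ω, J (x - y)) * φ x ^ 2) + 2 * (∫ x in Ω, F (φ x)) -
            (∫ x in Ω, ∫ y in Ω, J (x - y) * φ x * φ y) ≥
          α * ((∫ x in Ω, φ x ^ 2) + ∫ x in Ω, F (φ x)) - c :=
  stmt_14_general d Ω hΩfin J hJ ha F c₁ c₂ hc₁ hH3
end

section
/- There exist constants c_K > 0 and C ≥ 0 such that for all s, m ∈ ℝ: ((s³ − s) − (m³ − m))·(s − m) ≥ c_K·((s − m)⁴ + (s − m)²·m²) − C·(s − m)². In particular one may take c_K = 1/8 and C = 1. -/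
/-! With `d = s - m`, the left-hand side equals `d² (d² + 3dm + 3m² - 1)`, and the quadratic form
`d² + 3dm + 3m²` has smallest eigenvalue `(4 - √13)/2 > 1/8`. -/

theorem sq_add_sq_div_eight_le (d m : ℝ) : (d ^ 2 + m ^ 2) / 8 ≤ d ^ 2 + 3 * d * m + 3 * m ^ 2 := by
  nlinarith [sq_nonneg (7 * d + 12 * m), sq_nonneg m]

theorem cube_sub_cube_mul_sub (s m : ℝ) :
    (s ^ 3 - m ^ 3) * (s - m) = (s - m) ^ 2 * ((s - m) ^ 2 + 3 * (s - m) * m + 3 * m ^ 2) := by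
  ring

theorem sq_mul_div_eight_le_cube_sub_cube_mul_sub (s m : ℝ) :
    (s - m) ^ 2 * (((s - m) ^ 2 + m ^ 2) / 8) ≤ (s ^ 3 - m ^ 3) * (s - m) := by
  rw [cube_sub_cube_mul_sub]
  exact mul_le_mul_of_nonneg_left (sq_add_sq_div_eight_le _ _) (sq_nonneg _)

/-- Pointwise estimate for `F'(s) = s³ - s`: there are `c_K > 0` and `C ≥ 0`
(one may take `c_K = 1/8` and `C = 1`) such that for all `s, m`:
`((s³ - s) - (m³ - m))(s - m) ≥ c_K ((s - m)⁴ + (s - m)² m²) - C (s - m)²`. -/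
theorem stmt_15 :
    ∃ cK > (0 : ℝ), ∃ C ≥ (0 : ℝ), (cK = 1 / 8 ∧ C = 1) ∧
      ∀ s m : ℝ,
        ((s ^ 3 - s) - (m ^ 3 - m)) * (s - m) ≥
          cK * ((s - m) ^ 4 + (s - m) ^ 2 * m ^ 2) - C * (s - m) ^ 2 := by
  refine ⟨1 / 8, by norm_num, 1, zero_le_one, ⟨rfl, rfl⟩, fun s m => ?_⟩
  have key := sq_mul_div_eight_le_cube_sub_cube_mul_sub s m
  linarith
end
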